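/- arXiv:2204.07395 — 3 statements merged into one kernel-verified Lean document; each statement's English description precedes it below -/
import Mathlib

section
/- The function u(x,t) = α·dn(α(x - st), k) with s = α²(2 - k²) is a solution of the focusing modified Korteweg–de Vries equation u_t + 6u²u_x + u_xxx = 0. -/
/-!
Substituting a travelling wave `u = φ(x - c t)` into `u_t + 6u²u_x + u_xxx = 0` gives
`(φ'' + 2φ³ - c φ)' = 0`, so it suffices that `φ'' = c φ - 2 φ³`. The rescaling `φ ↦ β φ(β ·)`
maps solutions of this ODE to solutions with `c` replaced by `β² c`, and `dn` solves it with
`c = 2 - k²`: differentiating `dn' = -k² sn cn` gives `dn'' = -k² dn (cn² - sn²)`, which the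
Pythagorean identities turn into `(2 - k²) dn - 2 dn³`.
-/

structure IsMKdVProfile (c : ℝ) (φ φ' : ℝ → ℝ) : Prop where
  hasDerivAt : ∀ z, HasDerivAt φ (φ' z) z
  hasDerivAt_deriv : ∀ z, HasDerivAt φ' (c * φ z - 2 * φ z ^ 3) z

lemma HasDerivAt.comp_const_mul {f : ℝ → ℝ} {f' β z : ℝ} (hf : HasDerivAt f f' (β * z)) :
    HasDerivAt (fun z => f (β * z)) (β * f') z :=
  (hf.comp z ((hasDerivAt_id z).const_mul β)).congr_deriv (by ring)

namespace IsMKdVProfile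

variable {c : ℝ} {φ φ' : ℝ → ℝ}

lemma rescale (h : IsMKdVProfile c φ φ') (β : ℝ) :
    IsMKdVProfile (β ^ 2 * c) (fun z => β * φ (β * z)) (fun z => β ^ 2 * φ' (β * z)) where
  hasDerivAt z := ((h.hasDerivAt (β * z)).comp_const_mul.const_mul β).congr_deriv (by ring)
  hasDerivAt_deriv z :=
    ((h.hasDerivAt_deriv (β * z)).comp_const_mul.const_mul (β ^ 2)).congr_deriv (by ring)

lemma iteratedDeriv_three (h : IsMKdVProfile c φ φ') :
    iteratedDeriv 3 φ = fun z => (c - 6 * φ z ^ 2) * φ' z := by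
  have hφ'' : ∀ z, HasDerivAt (fun z => c * φ z - 2 * φ z ^ 3) ((c - 6 * φ z ^ 2) * φ' z) z :=
    fun z => (((h.hasDerivAt z).const_mul c).fun_sub
      (((h.hasDerivAt z).fun_pow 3).const_mul 2)).congr_deriv (by ring)
  rw [iteratedDeriv_succ, iteratedDeriv_succ, iteratedDeriv_one,
    funext fun z => (h.hasDerivAt z).deriv, funext fun z => (h.hasDerivAt_deriv z).deriv]
  exact funext fun z => (hφ'' z).deriv

theorem solves_mKdV (h : IsMKdVProfile c φ φ') (x t : ℝ) :
    deriv (fun t' => φ (x - c * t')) t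
        + 6 * φ (x - c * t) ^ 2 * deriv (fun x' => φ (x' - c * t)) x
        + iteratedDeriv 3 (fun x' => φ (x' - c * t)) x = 0 := by
  have ht : HasDerivAt (fun t' => φ (x - c * t')) (-(c * φ' (x - c * t))) t :=
    ((h.hasDerivAt (x - c * t)).comp t
      (((hasDerivAt_id t).const_mul c).const_sub x)).congr_deriv (by ring)
  rw [ht.deriv, deriv_comp_sub_const, (h.hasDerivAt _).deriv, iteratedDeriv_comp_sub_const,
    h.iteratedDeriv_three]
  ring

end IsMKdVProfile

lemma isMKdVProfile_dn {k : ℝ} {sn cn dn : ℝ → ℝ}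
    (hsn : ∀ x, HasDerivAt sn (cn x * dn x) x)
    (hcn : ∀ x, HasDerivAt cn (-(sn x * dn x)) x)
    (hdn : ∀ x, HasDerivAt dn (-(k ^ 2 * sn x * cn x)) x)
    (hp1 : ∀ x, sn x ^ 2 + cn x ^ 2 = 1)
    (hp2 : ∀ x, dn x ^ 2 + k ^ 2 * sn x ^ 2 = 1) :
    IsMKdVProfile (2 - k ^ 2) dn (fun z => -(k ^ 2 * sn z * cn z)) where
  hasDerivAt := hdn
  hasDerivAt_deriv z := by
    have h := (((hsn z).fun_mul (hcn z)).const_mul (k ^ 2)).fun_neg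
    simp only [← mul_assoc] at h
    exact h.congr_deriv (by linear_combination (-k ^ 2 * dn z) * hp1 z + 2 * dn z * hp2 z)

theorem dn_solves_mKdV_general (α k s : ℝ)
    (hs : s = α ^ 2 * (2 - k ^ 2))
    (sn cn dn : ℝ → ℝ)
    (hsn : ∀ x, HasDerivAt sn (cn x * dn x) x)
    (hcn : ∀ x, HasDerivAt cn (-(sn x * dn x)) x)
    (hdn : ∀ x, HasDerivAt dn (-(k ^ 2 * sn x * cn x)) x)
    (hp1 : ∀ x, sn x ^ 2 + cn x ^ 2 = 1)
    (hp2 : ∀ x, dn x ^ 2 + k ^ 2 * sn x ^ 2 = 1) :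
    ∀ x t : ℝ,
      deriv (fun t' => α * dn (α * (x - s * t'))) t
        + 6 * (α * dn (α * (x - s * t))) ^ 2
            * deriv (fun x' => α * dn (α * (x' - s * t))) x
        + iteratedDeriv 3 (fun x' => α * dn (α * (x' - s * t))) x = 0 := by
  subst hs
  exact ((isMKdVProfile_dn hsn hcn hdn hp1 hp2).rescale α).solves_mKdV

/-- `u(x,t) = α·dn(α(x - st), k)` with `s = α²(2 - k²)` solves the
focusing mKdV equation `u_t + 6u²u_x + u_xxx = 0`. -/
theorem dn_solves_mKdV (α k s : ℝ) (hα : α ≠ 0) (hk : k ∈ Set.Ioo (0:ℝ) 1)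
    (hs : s = α ^ 2 * (2 - k ^ 2))
    (sn cn dn : ℝ → ℝ)
    (hsn : ∀ x, HasDerivAt sn (cn x * dn x) x)
    (hcn : ∀ x, HasDerivAt cn (-(sn x * dn x)) x)
    (hdn : ∀ x, HasDerivAt dn (-(k ^ 2 * sn x * cn x)) x)
    (hp1 : ∀ x, sn x ^ 2 + cn x ^ 2 = 1)
    (hp2 : ∀ x, dn x ^ 2 + k ^ 2 * sn x ^ 2 = 1) :
    ∀ x t : ℝ,
      deriv (fun t' => α * dn (α * (x - s * t'))) t
        + 6 * (α * dn (α * (x - s * t))) ^ 2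
            * deriv (fun x' => α * dn (α * (x' - s * t))) x
        + iteratedDeriv 3 (fun x' => α * dn (α * (x' - s * t))) x = 0 :=
  dn_solves_mKdV_general α k s hs sn cn dn hsn hcn hdn hp1 hp2
end

section
/- Let f(q) = 3k⁴q⁴ - (8k⁴ + 2k²)q³ + (8k⁴ + 4k²)q² - (8k² - 2)q + 1 for modulus k ∈ (0,1). Then f'(q) = 12k⁴(q - 1/(2k²))(q - 1 - √(3-3k²)/(3k))(q - 1 + √(3-3k²)/(3k)); the critical point q₀ = 1 - √(3-3k²)/(3k) is negative if and only if k ∈ (0, 1/2); and f has two negative real roots q₂ < q₀ < q₁ < 0 (with -1/k < q₂) if and only if k ∈ (0, (√6 - √2)/4), a double negative root when k = (√6 - √2)/4, and no negative roots when k ∈ ((√6 - √2)/4, 1). -/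
/-!
For `q ≤ 0` the two roots `1 / (2k²)` and `1 + √(3 - 3k²) / (3k)` of `f'` are positive, so `f'` has
the sign of `q - q₀` there: `f` decreases to `f(q₀)` and then increases to `f(0) = 1`. As also
`f(-1/k) = 8(k + 1)² > 0`, the sign of `f(q₀)` decides between two negative roots, a double one and
none. Writing `k = sin θ` with `0 < θ < π/2`, one finds `9k f(q₀) = 8√3 cos³θ sin(2θ - π/6)`, whose
sign is that of `θ - π/12`, i.e. of `k - sin(π/12) = k - (√6 - √2)/4`.
-/

/-- The quartic `f(q) = 3k⁴q⁴ - (8k⁴+2k²)q³ + (8k⁴+4k²)q² - (8k²-2)q + 1`. -/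
noncomputable def fquartic (k q : ℝ) : ℝ :=
  3 * k ^ 4 * q ^ 4 - (8 * k ^ 4 + 2 * k ^ 2) * q ^ 3
    + (8 * k ^ 4 + 4 * k ^ 2) * q ^ 2 - (8 * k ^ 2 - 2) * q + 1

/-- The critical point `q₀ = 1 - √(3-3k²)/(3k)`. -/
noncomputable def qzero (k : ℝ) : ℝ := 1 - Real.sqrt (3 - 3 * k ^ 2) / (3 * k)

open Real Set

theorem sign_mul_of_pos {α : Type*} [Ring α] [LinearOrder α] [IsStrictOrderedRing α] {a : α}
    (ha : 0 < a) (b : α) : SignType.sign (a * b) = SignType.sign b := by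
  rw [sign_mul, sign_pos ha, one_mul]

theorem StrictMonoOn.sign_sub {α β : Type*} [AddCommGroup α] [LinearOrder α] [IsOrderedAddMonoid α]
    [AddCommGroup β] [LinearOrder β] [IsOrderedAddMonoid β] {f : α → β} {s : Set α}
    (hf : StrictMonoOn f s) {x y : α} (hx : x ∈ s) (hy : y ∈ s) :
    SignType.sign (f x - f y) = SignType.sign (x - y) := by
  rcases lt_trichotomy x y with h | rfl | h
  · rw [sign_neg (sub_neg.2 h), sign_neg (sub_neg.2 (hf hx hy h))]
  · simp
  · rw [sign_pos (sub_pos.2 h), sign_pos (sub_pos.2 (hf hy hx h))]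

theorem sign_sin_of_mem_Ioo {x : ℝ} (hx₁ : -π < x) (hx₂ : x < π) :
    SignType.sign (sin x) = SignType.sign x := by
  rcases lt_trichotomy x 0 with h | rfl | h
  · rw [sign_neg h, sign_neg (sin_neg_of_neg_of_neg_pi_lt h hx₁)]
  · simp
  · rw [sign_pos h, sign_pos (sin_pos_of_pos_of_lt_pi h hx₂)]

theorem Real.sin_pi_div_twelve : sin (π / 12) = (√6 - √2) / 4 := by
  have h6 : √6 = √2 * √3 := by rw [← sqrt_mul (by norm_num)]; norm_num
  rw [show π / 12 = π / 4 - π / 6 by ring, sin_sub, sin_pi_div_four, cos_pi_div_four,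
    sin_pi_div_six, cos_pi_div_six, h6]
  ring

lemma arcsin_sqrt_six_sub_sqrt_two_div_four : arcsin ((√6 - √2) / 4) = π / 12 := by
  rw [← sin_pi_div_twelve, arcsin_sin (by linarith [pi_pos]) (by linarith [pi_pos])]

lemma sqrt_six_sub_sqrt_two_div_four_pos : 0 < (√6 - √2) / 4 := by
  rw [← sin_pi_div_twelve]
  exact sin_pos_of_pos_of_lt_pi (by positivity) (by linarith [pi_pos])

lemma sqrt_six_sub_sqrt_two_div_four_lt_half : (√6 - √2) / 4 < 1 / 2 := by
  rw [← sin_pi_div_twelve, ← sin_pi_div_six]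
  exact sin_lt_sin_of_lt_of_le_pi_div_two (by linarith [pi_pos]) (by linarith [pi_pos])
    (by linarith [pi_pos])

lemma continuous_fquartic (k : ℝ) : Continuous (fquartic k) := by
  unfold fquartic; fun_prop

lemma fquartic_zero (k : ℝ) : fquartic k 0 = 1 := by
  simp [fquartic]

lemma fquartic_neg_one_div {k : ℝ} (hk : k ≠ 0) : fquartic k (-1 / k) = 8 * (k + 1) ^ 2 := by
  unfold fquartic; field_simp; ring

lemma hasDerivAt_fquartic (k q : ℝ) :
    HasDerivAt (fquartic k)
      (12 * k ^ 4 * q ^ 3 - (24 * k ^ 4 + 6 * k ^ 2) * q ^ 2 + (16 * k ^ 4 + 8 * k ^ 2) * q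
        - (8 * k ^ 2 - 2)) q := by
  have h := (((((hasDerivAt_pow 4 q).const_mul (3 * k ^ 4)).sub
      ((hasDerivAt_pow 3 q).const_mul (8 * k ^ 4 + 2 * k ^ 2))).add
      ((hasDerivAt_pow 2 q).const_mul (8 * k ^ 4 + 4 * k ^ 2))).sub
      ((hasDerivAt_id q).const_mul (8 * k ^ 2 - 2))).add_const 1
  exact h.congr_deriv (by norm_num; ring)

lemma deriv_fquartic {k : ℝ} (hk₀ : k ≠ 0) (hk₁ : k ^ 2 ≤ 1) (q : ℝ) :
    deriv (fquartic k) q =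
      12 * k ^ 4 * (q - 1 / (2 * k ^ 2))
        * (q - 1 - √(3 - 3 * k ^ 2) / (3 * k))
        * (q - 1 + √(3 - 3 * k ^ 2) / (3 * k)) := by
  have hs : √(3 - 3 * k ^ 2) ^ 2 = 3 - 3 * k ^ 2 := sq_sqrt (by linarith)
  rw [(hasDerivAt_fquartic k q).deriv]
  generalize √(3 - 3 * k ^ 2) = s at hs ⊢
  field_simp
  linear_combination (24 * k ^ 2 * q - 12) * hs

lemma exists_pos_deriv_fquartic_eq_mul {k : ℝ} (hk₀ : 0 < k) (hk₁ : k ≤ 1) {q : ℝ} (hq : q ≤ 0) :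
    ∃ c > 0, deriv (fquartic k) q = c * (q - qzero k) := by
  have h₁ : 0 < 1 / (2 * k ^ 2) := by positivity
  have h₂ : 0 ≤ √(3 - 3 * k ^ 2) / (3 * k) := by positivity
  refine ⟨12 * k ^ 4 * (q - 1 / (2 * k ^ 2)) * (q - 1 - √(3 - 3 * k ^ 2) / (3 * k)), ?_, ?_⟩
  · exact mul_pos_of_neg_of_neg (mul_neg_of_pos_of_neg (by positivity) (by linarith)) (by linarith)
  · rw [deriv_fquartic hk₀.ne' (by nlinarith), qzero]; ring

lemma strictAntiOn_fquartic {k : ℝ} (hk₀ : 0 < k) (hk₁ : k ≤ 1) :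
    StrictAntiOn (fquartic k) (Iic (min (qzero k) 0)) := by
  refine strictAntiOn_of_deriv_neg (convex_Iic _) (continuous_fquartic k).continuousOn
    fun q hq ↦ ?_
  rw [interior_Iic, mem_Iio, lt_min_iff] at hq
  obtain ⟨c, hc, hderiv⟩ := exists_pos_deriv_fquartic_eq_mul hk₀ hk₁ hq.2.le
  rw [hderiv]
  exact mul_neg_of_pos_of_neg hc (sub_neg.2 hq.1)

lemma strictMonoOn_fquartic {k : ℝ} (hk₀ : 0 < k) (hk₁ : k ≤ 1) :
    StrictMonoOn (fquartic k) (Icc (qzero k) 0) := by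
  refine strictMonoOn_of_deriv_pos (convex_Icc _ _) (continuous_fquartic k).continuousOn
    fun q hq ↦ ?_
  rw [interior_Icc] at hq
  obtain ⟨c, hc, hderiv⟩ := exists_pos_deriv_fquartic_eq_mul hk₀ hk₁ hq.2.le
  rw [hderiv]
  exact mul_pos hc (sub_pos.2 hq.1)

lemma isMinOn_fquartic {k : ℝ} (hk₀ : 0 < k) (hk₁ : k ≤ 1) :
    IsMinOn (fquartic k) (Iic 0) (min (qzero k) 0) := by
  refine isMinOn_iff.2 fun q (hq : q ≤ 0) ↦ ?_
  rcases le_total q (min (qzero k) 0) with h | h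
  · exact (strictAntiOn_fquartic hk₀ hk₁).antitoneOn h self_mem_Iic h
  · rcases min_choice (qzero k) 0 with hm | hm <;> rw [hm] at h ⊢
    · exact (strictMonoOn_fquartic hk₀ hk₁).monotoneOn ⟨le_rfl, hm ▸ min_le_right _ _⟩ ⟨h, hq⟩ h
    · rw [le_antisymm hq h]

lemma fquartic_pos_of_nonpos {k : ℝ} (hk₀ : 0 < k) (hk₁ : k ≤ 1)
    (hf : 0 < fquartic k (qzero k)) {q : ℝ} (hq : q ≤ 0) : 0 < fquartic k q := by
  have hmin := isMinOn_iff.1 (isMinOn_fquartic hk₀ hk₁) q hq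
  rcases min_choice (qzero k) 0 with hm | hm <;> rw [hm] at hmin
  · exact hf.trans_le hmin
  · rw [fquartic_zero] at hmin; linarith

lemma qzero_neg_iff {k : ℝ} (hk : 0 < k) : qzero k < 0 ↔ k < 1 / 2 := by
  rw [qzero, sub_neg, one_lt_div (by positivity), lt_sqrt (by positivity)]
  constructor <;> intro h <;> nlinarith

lemma neg_one_div_lt_qzero {k : ℝ} (hk : 0 < k) : -1 / k < qzero k := by
  have hs : √(3 - 3 * k ^ 2) < 3 * k + 3 := (sqrt_lt' (by positivity)).2 (by nlinarith)
  have h : qzero k - -1 / k = (3 * k + 3 - √(3 - 3 * k ^ 2)) / (3 * k) := by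
    unfold qzero; field_simp; ring
  exact sub_pos.1 (h ▸ div_pos (by linarith) (by positivity))

lemma exists_negative_roots {k : ℝ} (hk : 0 < k) (hf : fquartic k (qzero k) < 0)
    (hq₀ : qzero k < 0) :
    ∃ q₁ q₂ : ℝ, -1 / k < q₂ ∧ q₂ < qzero k ∧ qzero k < q₁ ∧ q₁ < 0 ∧
      fquartic k q₂ = 0 ∧ fquartic k q₁ = 0 := by
  obtain ⟨q₁, ⟨h₁, h₁'⟩, hq₁⟩ := intermediate_value_Ioo hq₀.le (continuous_fquartic k).continuousOn
    (show (0 : ℝ) ∈ Ioo (fquartic k (qzero k)) (fquartic k 0) by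
      rw [fquartic_zero]; exact ⟨hf, one_pos⟩)
  obtain ⟨q₂, ⟨h₂, h₂'⟩, hq₂⟩ := intermediate_value_Ioo' (neg_one_div_lt_qzero hk).le
    (continuous_fquartic k).continuousOn
    (show (0 : ℝ) ∈ Ioo (fquartic k (qzero k)) (fquartic k (-1 / k)) by
      rw [fquartic_neg_one_div hk.ne']; exact ⟨hf, by positivity⟩)
  exact ⟨q₁, q₂, h₂, h₂', h₁, h₁', hq₂, hq₁⟩

lemma mul_fquartic_one_sub_div {k s : ℝ} (hk : k ≠ 0) (hs : s ^ 2 = 3 - 3 * k ^ 2) :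
    9 * k * fquartic k (1 - s / (3 * k)) =
      4 * (1 - k ^ 2) * (6 * k * (1 - k ^ 2) + (2 * k ^ 2 - 1) * s) := by
  unfold fquartic
  field_simp
  linear_combination (9 * k * s ^ 2 + (18 - 36 * k ^ 2) * s + 27 * k ^ 3 - 27 * k) * hs

lemma mul_fquartic_sin {θ : ℝ} (hθ : sin θ ≠ 0) :
    9 * sin θ * fquartic (sin θ) (1 - √3 * cos θ / (3 * sin θ)) =
      8 * √3 * cos θ ^ 3 * sin (2 * θ - π / 6) := by
  have h3 : √3 ^ 2 = 3 := sq_sqrt (by norm_num)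
  rw [mul_fquartic_one_sub_div hθ (by rw [mul_pow, h3, cos_sq']; ring), ← cos_sq', sin_sub,
    sin_two_mul, cos_two_mul', sin_pi_div_six, cos_pi_div_six]
  linear_combination (-8 * sin θ * cos θ ^ 4) * h3 + 4 * √3 * cos θ ^ 3 * sin_sq_add_cos_sq θ

lemma sign_fquartic_qzero {k : ℝ} (hk : k ∈ Ioo 0 1) :
    SignType.sign (fquartic k (qzero k)) = SignType.sign (k - (√6 - √2) / 4) := by
  obtain ⟨hk₀, hk₁⟩ := hk
  have hsin : sin (arcsin k) = k := sin_arcsin (by linarith) hk₁.le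
  have hcos : 0 < cos (arcsin k) := cos_pos_of_mem_Ioo
    ⟨by linarith [arcsin_pos.2 hk₀, pi_pos], arcsin_lt_pi_div_two.2 hk₁⟩
  have hq : qzero k = 1 - √3 * cos (arcsin k) / (3 * sin (arcsin k)) := by
    rw [qzero, hsin, cos_arcsin, ← sqrt_mul (by norm_num)]; ring_nf
  have key := mul_fquartic_sin (hsin ▸ hk₀.ne')
  rw [← hq, hsin] at key
  have hmem : (√6 - √2) / 4 ∈ Icc (-1 : ℝ) 1 := by
    constructor <;> linarith [sqrt_six_sub_sqrt_two_div_four_pos, sqrt_six_sub_sqrt_two_div_four_lt_half]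
  calc SignType.sign (fquartic k (qzero k))
      = SignType.sign (8 * √3 * cos (arcsin k) ^ 3 * sin (2 * arcsin k - π / 6)) := by
        rw [← key, sign_mul_of_pos (by positivity)]
    _ = SignType.sign (2 * (arcsin k - arcsin ((√6 - √2) / 4))) := by
        rw [sign_mul_of_pos (by positivity), sign_sin_of_mem_Ioo (by linarith [arcsin_pos.2 hk₀, pi_pos])
          (by linarith [arcsin_le_pi_div_two k, pi_pos]), arcsin_sqrt_six_sub_sqrt_two_div_four]
        ring_nf
    _ = SignType.sign (k - (√6 - √2) / 4) := by
        rw [sign_mul_of_pos two_pos, strictMonoOn_arcsin.sign_sub ⟨by linarith, hk₁.le⟩ hmem]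

/-- the factorization of `f'`, the negativity criterion for `q₀`, and the
classification of negative roots of `f` according to the position of `k` relative to
`(√6 - √2)/4`. -/
theorem fquartic_negative_roots (k : ℝ) (hk : k ∈ Set.Ioo (0:ℝ) 1) :
    (∀ q : ℝ, deriv (fquartic k) q =
      12 * k ^ 4 * (q - 1 / (2 * k ^ 2))
        * (q - 1 - Real.sqrt (3 - 3 * k ^ 2) / (3 * k))
        * (q - 1 + Real.sqrt (3 - 3 * k ^ 2) / (3 * k))) ∧
    (qzero k < 0 ↔ k < 1 / 2) ∧
    ((∃ q1 q2 : ℝ, -1 / k < q2 ∧ q2 < qzero k ∧ qzero k < q1 ∧ q1 < 0 ∧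
        fquartic k q2 = 0 ∧ fquartic k q1 = 0)
      ↔ k < (Real.sqrt 6 - Real.sqrt 2) / 4) ∧
    (k = (Real.sqrt 6 - Real.sqrt 2) / 4 →
      qzero k < 0 ∧ fquartic k (qzero k) = 0 ∧ deriv (fquartic k) (qzero k) = 0) ∧
    ((Real.sqrt 6 - Real.sqrt 2) / 4 < k →
      ∀ q : ℝ, q < 0 → fquartic k q ≠ 0) := by
  have hsign := sign_fquartic_qzero hk
  obtain ⟨hk₀, hk₁⟩ := hk
  have hderiv := deriv_fquartic hk₀.ne' (by nlinarith)
  refine ⟨hderiv, qzero_neg_iff hk₀, ⟨?_, fun hlt ↦ ?_⟩, fun heq ↦ ?_, fun hgt q hq ↦ ?_⟩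
  · rintro ⟨q₁, -, -, -, hq₀q₁, hq₁, -, hfq₁⟩
    have hf : fquartic k (qzero k) < 0 := hfq₁ ▸ strictMonoOn_fquartic hk₀ hk₁.le
      ⟨le_rfl, (hq₀q₁.trans hq₁).le⟩ ⟨hq₀q₁.le, hq₁.le⟩ hq₀q₁
    rwa [sign_neg hf, eq_comm, sign_eq_neg_one_iff, sub_neg] at hsign
  · refine exists_negative_roots hk₀ ?_ ((qzero_neg_iff hk₀).2
      (hlt.trans sqrt_six_sub_sqrt_two_div_four_lt_half))
    rwa [sign_neg (sub_neg.2 hlt), sign_eq_neg_one_iff] at hsign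
  · refine ⟨(qzero_neg_iff hk₀).2 (heq ▸ sqrt_six_sub_sqrt_two_div_four_lt_half), ?_, ?_⟩
    · exact sign_eq_zero_iff.1 (hsign.trans (sign_eq_zero_iff.2 (sub_eq_zero.2 heq)))
    · rw [hderiv, qzero]; ring
  · have hf : 0 < fquartic k (qzero k) := by
      rwa [sign_pos (sub_pos.2 hgt), sign_eq_one_iff] at hsign
    exact (fquartic_pos_of_nonpos hk₀ hk₁.le hf hq.le).ne'
end

section
/- Under the dn-type background (l = K'/2), the four cut endpoints of the conformal map λ(z) = (iαk²/2)·sn(i(z-l))cn(i(z-l))/dn(i(z-l)) at z = ±K'/2 ± iK/2 are λ̂₁ = -(iα/2)(1 - k'), λ̂₂ = (iα/2)(1 - k'), λ̂₃ = -(iα/2)(1 + k'), λ̂₄ = (iα/2)(1 + k'); as k → 0⁺ they converge to 0, 0, -iα, iα respectively. -/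
/-! At the four endpoints the argument `i(z - K'/2)` is `∓K/2` or `∓K/2 - iK'`, so the
half-argument identity turns `λ` into `(iα/2)(1 - dn w)/sn w` with `w = ∓K` or
`w = ∓K - 2iK'`. Parity and the (anti)periodicity in `2iK'` give `sn w = ∓1` at
both, and `dn w = k'` resp. `dn w = -k'`. The limits follow from `k' = √(1 - k²) → 1`. -/

open Complex Filter Topology

lemma mul_sn_mul_cn_div_dn_eq_of_two_mul_eq {sn cn dn : ℂ → ℂ} {k : ℝ}
    (hhalf : ∀ u : ℂ, (k : ℂ) ^ 2 * sn u * cn u / dn u = (1 - dn (2 * u)) / sn (2 * u))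
    (c : ℂ) {u w : ℂ} (hw : 2 * u = w) :
    c * (k : ℂ) ^ 2 / 2 * sn u * cn u / dn u = c / 2 * ((1 - dn w) / sn w) := by
  rw [← hw, ← hhalf u]
  ring

lemma tendsto_ofReal_sqrt_one_sub_sq :
    Tendsto (fun m : ℝ => ((√(1 - m ^ 2) : ℝ) : ℂ)) (𝓝[>] 0) (𝓝 1) := by
  have hcont : Continuous fun m : ℝ => ((√(1 - m ^ 2) : ℝ) : ℂ) := by fun_prop
  simpa using (hcont.tendsto 0).mono_left nhdsWithin_le_nhds

lemma tendsto_one_sub_ofReal_sqrt_one_sub_sq :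
    Tendsto (fun m : ℝ => 1 - ((√(1 - m ^ 2) : ℝ) : ℂ)) (𝓝[>] 0) (𝓝 0) := by
  simpa using (tendsto_const_nhds (x := (1 : ℂ))).sub tendsto_ofReal_sqrt_one_sub_sq

lemma tendsto_one_add_ofReal_sqrt_one_sub_sq :
    Tendsto (fun m : ℝ => 1 + ((√(1 - m ^ 2) : ℝ) : ℂ)) (𝓝[>] 0) (𝓝 2) := by
  simpa [one_add_one_eq_two] using
    (tendsto_const_nhds (x := (1 : ℂ))).add tendsto_ofReal_sqrt_one_sub_sq

theorem dn_cut_endpoints_general (α k k' K K' : ℝ)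
    (sn cn dn : ℂ → ℂ)
    (hKs : sn (K : ℂ) = 1) (hKd : dn (K : ℂ) = (k' : ℂ))
    (ho : ∀ u : ℂ, sn (-u) = -sn u)
    (he2 : ∀ u : ℂ, dn (-u) = dn u)
    (hperK'1 : ∀ u : ℂ, sn (u + 2 * Complex.I * K') = sn u)
    (hperK'3 : ∀ u : ℂ, dn (u + 2 * Complex.I * K') = -dn u)
    (hhalf : ∀ u : ℂ, (k : ℂ) ^ 2 * sn u * cn u / dn u = (1 - dn (2 * u)) / sn (2 * u)) :
    let lam : ℂ → ℂ := fun z =>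
      (Complex.I * (α : ℂ) * (k : ℂ) ^ 2 / 2)
        * sn (Complex.I * (z - (K' : ℂ) / 2)) * cn (Complex.I * (z - (K' : ℂ) / 2))
        / dn (Complex.I * (z - (K' : ℂ) / 2))
    (lam ((K' : ℂ) / 2 + Complex.I * K / 2)
        = -((Complex.I * (α : ℂ) / 2) * (1 - (k' : ℂ))))
    ∧ (lam ((K' : ℂ) / 2 - Complex.I * K / 2)
        = (Complex.I * (α : ℂ) / 2) * (1 - (k' : ℂ)))
    ∧ (lam (-(K' : ℂ) / 2 + Complex.I * K / 2)
        = -((Complex.I * (α : ℂ) / 2) * (1 + (k' : ℂ))))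
    ∧ (lam (-(K' : ℂ) / 2 - Complex.I * K / 2)
        = (Complex.I * (α : ℂ) / 2) * (1 + (k' : ℂ)))
    ∧ Filter.Tendsto (fun m : ℝ => -((Complex.I * (α : ℂ) / 2) *
          (1 - ((Real.sqrt (1 - m ^ 2) : ℝ) : ℂ))))
        (nhdsWithin 0 (Set.Ioi 0)) (nhds (0 : ℂ))
    ∧ Filter.Tendsto (fun m : ℝ => (Complex.I * (α : ℂ) / 2) *
          (1 - ((Real.sqrt (1 - m ^ 2) : ℝ) : ℂ)))
        (nhdsWithin 0 (Set.Ioi 0)) (nhds (0 : ℂ))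
    ∧ Filter.Tendsto (fun m : ℝ => -((Complex.I * (α : ℂ) / 2) *
          (1 + ((Real.sqrt (1 - m ^ 2) : ℝ) : ℂ))))
        (nhdsWithin 0 (Set.Ioi 0)) (nhds (-(Complex.I * (α : ℂ))))
    ∧ Filter.Tendsto (fun m : ℝ => (Complex.I * (α : ℂ) / 2) *
          (1 + ((Real.sqrt (1 - m ^ 2) : ℝ) : ℂ)))
        (nhdsWithin 0 (Set.Ioi 0)) (nhds (Complex.I * (α : ℂ))) := by
  dsimp only
  have sn_neg_K : sn (-K) = -1 := by rw [ho, hKs]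
  have dn_neg_K : dn (-K) = k' := by rw [he2, hKd]
  have hsn : Function.Periodic sn (2 * I * K') := hperK'1
  have hdn : Function.Antiperiodic dn (2 * I * K') := hperK'3
  refine ⟨?_, ?_, ?_, ?_, ?_, ?_, ?_, ?_⟩
  · rw [mul_sn_mul_cn_div_dn_eq_of_two_mul_eq hhalf _ (w := -K)
      (by linear_combination (K : ℂ) * I_mul_I), sn_neg_K, dn_neg_K]
    ring
  · rw [mul_sn_mul_cn_div_dn_eq_of_two_mul_eq hhalf _ (w := K)
      (by linear_combination -(K : ℂ) * I_mul_I), hKs, hKd]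
    ring
  · rw [mul_sn_mul_cn_div_dn_eq_of_two_mul_eq hhalf _ (w := -K - 2 * I * K')
      (by linear_combination (K : ℂ) * I_mul_I),
      hsn.sub_eq, hdn.sub_eq, sn_neg_K, dn_neg_K]
    ring
  · rw [mul_sn_mul_cn_div_dn_eq_of_two_mul_eq hhalf _ (w := K - 2 * I * K')
      (by linear_combination -(K : ℂ) * I_mul_I),
      hsn.sub_eq, hdn.sub_eq, hKs, hKd]
    ring
  · simpa using (tendsto_one_sub_ofReal_sqrt_one_sub_sq.const_mul (I * α / 2)).neg
  · simpa using tendsto_one_sub_ofReal_sqrt_one_sub_sq.const_mul (I * α / 2)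
  · convert (tendsto_one_add_ofReal_sqrt_one_sub_sq.const_mul (I * α / 2)).neg using 2
    ring
  · convert tendsto_one_add_ofReal_sqrt_one_sub_sq.const_mul (I * α / 2) using 2
    ring

/-- under the dn-type background (`l = K'/2`), the four cut endpoints of
the conformal map `λ(z) = (iαk²/2)sn(i(z-l))cn(i(z-l))/dn(i(z-l))` at
`z = ±K'/2 ± iK/2` are `λ̂₁ = -(iα/2)(1-k')`, `λ̂₂ = (iα/2)(1-k')`,
`λ̂₃ = -(iα/2)(1+k')`, `λ̂₄ = (iα/2)(1+k')`; as `k → 0⁺` (with `k' = √(1-k²)`) they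
converge to `0, 0, -iα, iα` respectively.  The complex Jacobi functions of modulus
`k` are characterized by the standard values at `0` and `K`, parity, periodicity
and the half-argument identity `k²sn(u)cn(u)/dn(u) = (1-dn(2u))/sn(2u)`. -/
theorem dn_cut_endpoints (α k k' K K' : ℝ)
    (hα : α ≠ 0) (hk : k ∈ Set.Ioo (0:ℝ) 1) (hk' : k' = Real.sqrt (1 - k ^ 2))
    (hK : 0 < K) (hK' : 0 < K')
    (sn cn dn : ℂ → ℂ)
    (h0s : sn 0 = 0) (h0c : cn 0 = 1) (h0d : dn 0 = 1)
    (hKs : sn (K : ℂ) = 1) (hKc : cn (K : ℂ) = 0) (hKd : dn (K : ℂ) = (k' : ℂ))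
    (ho : ∀ u : ℂ, sn (-u) = -sn u)
    (he1 : ∀ u : ℂ, cn (-u) = cn u)
    (he2 : ∀ u : ℂ, dn (-u) = dn u)
    (hperK1 : ∀ u : ℂ, sn (u + 2 * K) = -sn u)
    (hperK2 : ∀ u : ℂ, cn (u + 2 * K) = -cn u)
    (hperK3 : ∀ u : ℂ, dn (u + 2 * K) = dn u)
    (hperK'1 : ∀ u : ℂ, sn (u + 2 * Complex.I * K') = sn u)
    (hperK'2 : ∀ u : ℂ, cn (u + 2 * Complex.I * K') = -cn u)
    (hperK'3 : ∀ u : ℂ, dn (u + 2 * Complex.I * K') = -dn u)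
    (hhalf : ∀ u : ℂ, (k : ℂ) ^ 2 * sn u * cn u / dn u = (1 - dn (2 * u)) / sn (2 * u)) :
    let lam : ℂ → ℂ := fun z =>
      (Complex.I * (α : ℂ) * (k : ℂ) ^ 2 / 2)
        * sn (Complex.I * (z - (K' : ℂ) / 2)) * cn (Complex.I * (z - (K' : ℂ) / 2))
        / dn (Complex.I * (z - (K' : ℂ) / 2))
    (lam ((K' : ℂ) / 2 + Complex.I * K / 2)
        = -((Complex.I * (α : ℂ) / 2) * (1 - (k' : ℂ))))
    ∧ (lam ((K' : ℂ) / 2 - Complex.I * K / 2)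
        = (Complex.I * (α : ℂ) / 2) * (1 - (k' : ℂ)))
    ∧ (lam (-(K' : ℂ) / 2 + Complex.I * K / 2)
        = -((Complex.I * (α : ℂ) / 2) * (1 + (k' : ℂ))))
    ∧ (lam (-(K' : ℂ) / 2 - Complex.I * K / 2)
        = (Complex.I * (α : ℂ) / 2) * (1 + (k' : ℂ)))
    ∧ Filter.Tendsto (fun m : ℝ => -((Complex.I * (α : ℂ) / 2) *
          (1 - ((Real.sqrt (1 - m ^ 2) : ℝ) : ℂ))))
        (nhdsWithin 0 (Set.Ioi 0)) (nhds (0 : ℂ))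
    ∧ Filter.Tendsto (fun m : ℝ => (Complex.I * (α : ℂ) / 2) *
          (1 - ((Real.sqrt (1 - m ^ 2) : ℝ) : ℂ)))
        (nhdsWithin 0 (Set.Ioi 0)) (nhds (0 : ℂ))
    ∧ Filter.Tendsto (fun m : ℝ => -((Complex.I * (α : ℂ) / 2) *
          (1 + ((Real.sqrt (1 - m ^ 2) : ℝ) : ℂ))))
        (nhdsWithin 0 (Set.Ioi 0)) (nhds (-(Complex.I * (α : ℂ))))
    ∧ Filter.Tendsto (fun m : ℝ => (Complex.I * (α : ℂ) / 2) *
          (1 + ((Real.sqrt (1 - m ^ 2) : ℝ) : ℂ)))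
        (nhdsWithin 0 (Set.Ioi 0)) (nhds (Complex.I * (α : ℂ))) :=
  dn_cut_endpoints_general α k k' K K' sn cn dn hKs hKd ho he2 hperK'1 hperK'3 hhalf
end
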